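/- For every complex λ ≠ 0 and real θ ≠ 0 with |sinh(θ/2)| < 1, sinh(λ θ)/(λ sinh θ) = F(1 + λ, 1 − λ; 3/2; −sinh²(θ/2)). -/

import Mathlib

/-!
Write `z(u) = -sinh²(u/2)` and `F = F(1+λ, 1-λ; 3/2; ·)`. The coefficients of `F` grow
polynomially, so `F` can be differentiated termwise on the unit disc, where it satisfies the
hypergeometric equation `z(1-z)F'' + (3/2 - 3z)F' - (1-λ²)F = 0`. Since `sinh² u = -4z(1-z)` and
`cosh u = 1 - 2z`, this equation turns into `y'' = λ²y` for `y(u) = sinh u · F(z(u))`, with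
`y(0) = 0` and `y'(0) = 1`. For such `y` the functions `(y' ∓ λy) e^{±λu}` are constant, equal
to `1`; eliminating `y'` gives `λ y(u) = sinh(λu)`.
-/

/-- The Gauss hypergeometric series `F(a,b;c;z)`. -/
noncomputable def hypF (a b c z : ℂ) : ℂ :=
  ∑' n : ℕ, ((ascPochhammer ℂ n).eval a * (ascPochhammer ℂ n).eval b)
      / ((ascPochhammer ℂ n).eval c * (n.factorial : ℂ)) * z ^ n

open Asymptotics Filter

section PowerSeries

variable {𝕜 : Type*} [RCLike 𝕜]

noncomputable def powSeries (c : ℕ → 𝕜) (z : 𝕜) : 𝕜 := ∑' n, c n * z ^ n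

def derivCoeff (c : ℕ → 𝕜) (n : ℕ) : 𝕜 := (n + 1) * c (n + 1)

lemma powSeries_zero (c : ℕ → 𝕜) : powSeries c 0 = c 0 := by
  rw [powSeries, tsum_eq_single 0 fun n hn => by simp [hn]]
  simp

lemma isBigO_natCast_add_one_pow (k : ℕ) :
    (fun n : ℕ => ((n : ℝ) + 1) ^ k) =O[atTop] fun n => (n : ℝ) ^ k := by
  refine (IsBigO.of_bound 2 ?_).pow k
  filter_upwards [eventually_ge_atTop 1] with n hn
  have : (1 : ℝ) ≤ n := by exact_mod_cast hn
  rw [Real.norm_of_nonneg (by positivity), Real.norm_of_nonneg (by positivity)]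
  linarith

variable {c : ℕ → 𝕜} {k : ℕ}

lemma summable_norm_mul_pow_of_isBigO (hc : c =O[atTop] fun n => (n : ℝ) ^ k) {r : ℝ}
    (hr0 : 0 ≤ r) (hr : r < 1) : Summable fun n => ‖c n‖ * r ^ n := by
  refine summable_of_isBigO_nat (summable_pow_mul_geometric_of_norm_lt_one k ?_)
    (hc.norm_left.mul (isBigO_refl _ _))
  rwa [Real.norm_of_nonneg hr0]

lemma hasSum_powSeries (hc : c =O[atTop] fun n => (n : ℝ) ^ k) {z : 𝕜} (hz : ‖z‖ < 1) :
    HasSum (fun n => c n * z ^ n) (powSeries c z) :=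
  (Summable.of_norm_bounded (summable_norm_mul_pow_of_isBigO hc (norm_nonneg z) hz)
    fun n => by rw [norm_mul, norm_pow]).hasSum

lemma isBigO_derivCoeff (hc : c =O[atTop] fun n => (n : ℝ) ^ k) :
    derivCoeff c =O[atTop] fun n => (n : ℝ) ^ (k + 1) := by
  have hsucc : (fun n => c (n + 1)) =O[atTop] fun n => (n : ℝ) ^ k := by
    refine (hc.comp_tendsto (tendsto_add_atTop_nat 1)).trans ?_
    simpa [Function.comp_def] using isBigO_natCast_add_one_pow k
  have hcast : (fun n : ℕ => (n : 𝕜) + 1) =O[atTop] fun n => (n : ℝ) := by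
    refine IsBigO.trans ?_ (by simpa using isBigO_natCast_add_one_pow 1)
    refine IsBigO.of_bound 1 (Eventually.of_forall fun n => le_of_eq ?_)
    rw [one_mul, ← Nat.cast_succ, ← Nat.cast_succ, RCLike.norm_natCast, Real.norm_natCast]
  have h := hcast.mul hsucc
  simp only [← pow_succ'] at h
  exact h

lemma hasDerivAt_powSeries (hc : c =O[atTop] fun n => (n : ℝ) ^ k) {z : 𝕜} (hz : ‖z‖ < 1) :
    HasDerivAt (powSeries c) (powSeries (derivCoeff c) z) z := by
  obtain ⟨r, hzr, hr1⟩ := exists_between hz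
  have hr0 : 0 ≤ r := (norm_nonneg z).trans hzr.le
  have hu : Summable fun n : ℕ => ‖(n : 𝕜) * c n‖ * r ^ (n - 1) := by
    refine (summable_nat_add_iff 1).1 ?_
    simpa [derivCoeff] using summable_norm_mul_pow_of_isBigO (isBigO_derivCoeff hc) hr0 hr1
  have hbound : ∀ (n : ℕ) (w : 𝕜), w ∈ Metric.ball 0 r →
      ‖c n * (n * w ^ (n - 1))‖ ≤ ‖(n : 𝕜) * c n‖ * r ^ (n - 1) := by
    intro n w hw
    rw [mem_ball_zero_iff] at hw
    rw [mul_left_comm, ← mul_assoc, norm_mul, norm_pow]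
    gcongr
  have hz' : z ∈ Metric.ball 0 r := mem_ball_zero_iff.2 hzr
  have hderiv := hasDerivAt_tsum_of_isPreconnected hu Metric.isOpen_ball
    (convex_ball 0 r).isPreconnected (fun n w _ => (hasDerivAt_pow n w).const_mul (c n))
    hbound hz' (hasSum_powSeries hc hz).summable hz'
  refine hderiv.congr_deriv ?_
  rw [(Summable.of_norm_bounded hu fun n => hbound n z hz').tsum_eq_zero_add]
  simp [powSeries, derivCoeff, mul_left_comm, mul_assoc]

lemma hasSum_natCast_mul_of_hasSum_derivCoeff {z S : 𝕜}
    (h : HasSum (fun n => derivCoeff c n * z ^ n) S) :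
    HasSum (fun n => n * c n * z ^ n) (z * S) := by
  refine (hasSum_nat_add_iff' 1).1 ?_
  simpa [derivCoeff, pow_succ, mul_comm, mul_left_comm, mul_assoc] using h.mul_left z

theorem powSeries_hypergeometric_ode {a b γ : 𝕜}
    (hrec : ∀ n : ℕ, c (n + 1) * ((n + 1) * (γ + n)) = c n * ((a + n) * (b + n)))
    (hc : c =O[atTop] fun n => (n : ℝ) ^ k) {z : 𝕜} (hz : ‖z‖ < 1) :
    z * (1 - z) * powSeries (derivCoeff (derivCoeff c)) z
      + (γ - (a + b + 1) * z) * powSeries (derivCoeff c) z - a * b * powSeries c z = 0 := by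
  have h0 := hasSum_powSeries hc hz
  have h1 := hasSum_powSeries (isBigO_derivCoeff hc) hz
  have h2 := hasSum_powSeries (isBigO_derivCoeff (isBigO_derivCoeff hc)) hz
  have h1z := hasSum_natCast_mul_of_hasSum_derivCoeff h1
  have h2z := hasSum_natCast_mul_of_hasSum_derivCoeff h2
  have h2zz := hasSum_natCast_mul_of_hasSum_derivCoeff (c := fun n => (n - 1) * c n) <| by
    convert h2z using 2 with n
    simp only [derivCoeff]
    push_cast
    ring
  have hsum := (((h2z.sub h2zz).add (h1.mul_left γ)).sub (h1z.mul_left (a + b + 1))).sub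
    (h0.mul_left (a * b))
  refine Eq.trans (by ring) (hsum.unique ?_)
  convert hasSum_zero using 2 with n
  simp only [derivCoeff]
  linear_combination z ^ n * hrec n

end PowerSeries

noncomputable def hypCoeff (a b c : ℂ) (n : ℕ) : ℂ :=
  ((ascPochhammer ℂ n).eval a * (ascPochhammer ℂ n).eval b)
      / ((ascPochhammer ℂ n).eval c * (n.factorial : ℂ))

lemma hypF_eq_powSeries (a b c : ℂ) : hypF a b c = powSeries (hypCoeff a b c) := rfl

lemma hypCoeff_zero (a b c : ℂ) : hypCoeff a b c 0 = 1 := by simp [hypCoeff]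

lemma hypCoeff_succ_mul {a b c : ℂ} (hc : ∀ k : ℕ, (k : ℂ) ≠ -c) (n : ℕ) :
    hypCoeff a b c (n + 1) * ((n + 1) * (c + n)) = hypCoeff a b c n * ((a + n) * (b + n)) := by
  have hpoch : (ascPochhammer ℂ (n + 1)).eval c ≠ 0 := by
    rw [ne_eq, ascPochhammer_eval_eq_zero_iff]
    rintro ⟨k, -, hk⟩
    exact hc k hk
  rw [ascPochhammer_succ_eval] at hpoch
  obtain ⟨hpoch, hcn⟩ := mul_ne_zero_iff.1 hpoch
  simp only [hypCoeff, ascPochhammer_succ_eval, Nat.factorial_succ, Nat.cast_mul, Nat.cast_succ]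
  field_simp

lemma natCast_ne_neg_three_halves (k : ℕ) : (k : ℂ) ≠ -(3 / 2) := by
  intro h
  have := congrArg Complex.re h
  norm_num at this
  linarith [k.cast_nonneg (α := ℝ)]

-- With `x = n + 1` this reads `1 + k / x ^ 2 ≤ ((x + 1) / x) ^ k`, which turns the bound
-- `1 + ‖λ‖² / (n + 1) ^ 2` on the ratio of consecutive coefficients into `‖c n‖ ≤ (n + 1) ^ k`.
lemma pow_mul_sq_add_le {x : ℝ} (hx : 1 ≤ x) (k : ℕ) :
    x ^ k * (x ^ 2 + k) ≤ (x + 1) ^ k * x ^ 2 := by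
  induction k with
  | zero => simp
  | succ k ih =>
    have hpow : x ^ k ≤ (x + 1) ^ k := pow_le_pow_left₀ (by linarith) (by linarith) k
    calc x ^ (k + 1) * (x ^ 2 + ↑(k + 1)) = x * (x ^ k * (x ^ 2 + k)) + x ^ k * x := by
          push_cast; ring
      _ ≤ x * ((x + 1) ^ k * x ^ 2) + (x + 1) ^ k * x ^ 2 := by
          gcongr
          nlinarith
      _ = (x + 1) ^ (k + 1) * x ^ 2 := by ring

lemma norm_hypCoeff_le {lam : ℂ} {k : ℕ} (hk : ‖lam‖ ^ 2 ≤ k) (n : ℕ) :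
    ‖hypCoeff (1 + lam) (1 - lam) (3 / 2) n‖ ≤ ((n : ℝ) + 1) ^ k := by
  induction n with
  | zero => simp [hypCoeff_zero]
  | succ n ih =>
    have hrec := congrArg norm
      (hypCoeff_succ_mul (a := 1 + lam) (b := 1 - lam) natCast_ne_neg_three_halves n)
    have hden : ‖((n : ℂ) + 1) * (3 / 2 + n)‖ = ((n : ℝ) + 1) * (3 / 2 + n) := by
      rw [← Complex.norm_of_nonneg (by positivity : (0 : ℝ) ≤ ((n : ℝ) + 1) * (3 / 2 + n))]
      push_cast
      rfl
    have hnum : ‖(1 + lam + n) * (1 - lam + n)‖ ≤ ((n : ℝ) + 1) ^ 2 + k := by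
      calc ‖(1 + lam + n) * (1 - lam + n)‖ = ‖((n : ℂ) + 1) ^ 2 - lam ^ 2‖ := by ring_nf
        _ ≤ ‖((n : ℂ) + 1) ^ 2‖ + ‖lam ^ 2‖ := norm_sub_le _ _
        _ ≤ ((n : ℝ) + 1) ^ 2 + k := by
          rw [norm_pow, norm_pow, ← Nat.cast_succ, Complex.norm_natCast, Nat.cast_succ]
          linarith
    rw [norm_mul, hden, norm_mul] at hrec
    have key : ‖hypCoeff (1 + lam) (1 - lam) (3 / 2) (n + 1)‖ * (((n : ℝ) + 1) * (3 / 2 + n))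
        ≤ ((n : ℝ) + 1 + 1) ^ k * (((n : ℝ) + 1) * (3 / 2 + n)) :=
      calc _ = _ := hrec
        _ ≤ ((n : ℝ) + 1) ^ k * (((n : ℝ) + 1) ^ 2 + k) :=
          mul_le_mul ih hnum (norm_nonneg _) (by positivity)
        _ ≤ ((n : ℝ) + 1 + 1) ^ k * ((n : ℝ) + 1) ^ 2 := pow_mul_sq_add_le (by linarith) k
        _ ≤ ((n : ℝ) + 1 + 1) ^ k * (((n : ℝ) + 1) * (3 / 2 + n)) := by gcongr; nlinarith
    push_cast
    exact le_of_mul_le_mul_right key (by positivity)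

lemma isBigO_hypCoeff (lam : ℂ) :
    ∃ k : ℕ, hypCoeff (1 + lam) (1 - lam) (3 / 2) =O[atTop] fun n => (n : ℝ) ^ k := by
  refine ⟨⌈‖lam‖ ^ 2⌉₊, (IsBigO.of_bound 1 (Eventually.of_forall fun n => ?_)).trans
    (isBigO_natCast_add_one_pow _)⟩
  rw [one_mul, Real.norm_of_nonneg (by positivity)]
  exact norm_hypCoeff_le (Nat.le_ceil _) n

lemma abs_sinh_half_lt_one_iff {u : ℝ} : |Real.sinh (u / 2)| < 1 ↔ |u| < 2 * Real.arsinh 1 := by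
  rw [Real.abs_sinh, abs_div, abs_two]
  conv_lhs => rw [← Real.sinh_arsinh 1, Real.sinh_lt_sinh]
  constructor <;> intro h <;> linarith

noncomputable def negSinhHalfSq (u : ℝ) : ℂ := ((-(Real.sinh (u / 2) ^ 2) : ℝ) : ℂ)

lemma negSinhHalfSq_eq (u : ℝ) : negSinhHalfSq u = -Complex.sinh (u / 2) ^ 2 := by
  simp [negSinhHalfSq, Complex.ofReal_sinh]

lemma norm_negSinhHalfSq_lt_one {u : ℝ} (hu : |Real.sinh (u / 2)| < 1) :
    ‖negSinhHalfSq u‖ < 1 := by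
  rw [negSinhHalfSq, Complex.norm_real, norm_neg, norm_pow, Real.norm_eq_abs]
  exact pow_lt_one₀ (abs_nonneg _) hu two_ne_zero

lemma hasDerivAt_negSinhHalfSq (u : ℝ) :
    HasDerivAt negSinhHalfSq (-Complex.sinh u / 2) u := by
  have h := ((((hasDerivAt_id _).div_const 2).csinh.pow 2).neg).comp_ofReal (z := u)
  rw [funext negSinhHalfSq_eq]
  refine h.congr_deriv ?_
  rw [show (u : ℂ) = 2 * (u / 2) by ring, Complex.sinh_two_mul]
  simp only [id]
  ring_nf

lemma sinh_sq_eq_negSinhHalfSq (u : ℝ) :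
    Complex.sinh u ^ 2 = -4 * negSinhHalfSq u * (1 - negSinhHalfSq u) := by
  rw [negSinhHalfSq_eq, show (u : ℂ) = 2 * (u / 2) by ring, Complex.sinh_two_mul, mul_pow,
    Complex.cosh_sq]
  ring_nf

lemma cosh_eq_negSinhHalfSq (u : ℝ) : Complex.cosh u = 1 - 2 * negSinhHalfSq u := by
  rw [negSinhHalfSq_eq, show (u : ℂ) = 2 * (u / 2) by ring, Complex.cosh_two_mul,
    Complex.cosh_sq]
  ring_nf

section ChangeOfVariables

variable {G G₁ G₂ : ℂ → ℂ} {u : ℝ}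

lemma hasDerivAt_sinh_mul_comp (hG : HasDerivAt G (G₁ (negSinhHalfSq u)) (negSinhHalfSq u)) :
    HasDerivAt (fun v : ℝ => Complex.sinh v * G (negSinhHalfSq v))
      (Complex.cosh u * G (negSinhHalfSq u) - Complex.sinh u ^ 2 / 2 * G₁ (negSinhHalfSq u))
      u := by
  have h := (Complex.hasDerivAt_sinh _).comp_ofReal.mul (hG.comp u (hasDerivAt_negSinhHalfSq u))
  exact h.congr_deriv (by rw [Function.comp_apply]; ring)

lemma hasDerivAt_cosh_mul_comp_sub {lam : ℂ}
    (hG : HasDerivAt G (G₁ (negSinhHalfSq u)) (negSinhHalfSq u))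
    (hG₁ : HasDerivAt G₁ (G₂ (negSinhHalfSq u)) (negSinhHalfSq u))
    (hode : negSinhHalfSq u * (1 - negSinhHalfSq u) * G₂ (negSinhHalfSq u)
      + (3 / 2 - 3 * negSinhHalfSq u) * G₁ (negSinhHalfSq u)
      - (1 - lam ^ 2) * G (negSinhHalfSq u) = 0) :
    HasDerivAt (fun v : ℝ => Complex.cosh v * G (negSinhHalfSq v)
        - Complex.sinh v ^ 2 / 2 * G₁ (negSinhHalfSq v))
      (lam ^ 2 * (Complex.sinh u * G (negSinhHalfSq u))) u := by
  have hw := hasDerivAt_negSinhHalfSq u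
  have h := ((Complex.hasDerivAt_cosh _).comp_ofReal.mul (hG.comp u hw)).sub
    ((((Complex.hasDerivAt_sinh _).pow 2).comp_ofReal.div_const 2).mul (hG₁.comp u hw))
  refine h.congr_deriv ?_
  simp only [Function.comp_def, Pi.pow_apply, Nat.cast_ofNat, Nat.add_one_sub_one, pow_one]
  linear_combination (-Complex.sinh u) * hode
    - (3 / 2 * Complex.sinh u * G₁ (negSinhHalfSq u)) * cosh_eq_negSinhHalfSq u
    + (Complex.sinh u * G₂ (negSinhHalfSq u) / 4) * sinh_sq_eq_negSinhHalfSq u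

end ChangeOfVariables

section SecondOrderODE

variable {s : Set ℝ} {y y' : ℝ → ℂ}

lemma sub_mul_mul_exp_eq {μ : ℂ} (hs : IsOpen s) (hs' : IsPreconnected s)
    (hy : ∀ u ∈ s, HasDerivAt y (y' u) u) (hy' : ∀ u ∈ s, HasDerivAt y' (μ ^ 2 * y u) u)
    {u v : ℝ} (hu : u ∈ s) (hv : v ∈ s) :
    (y' u - μ * y u) * Complex.exp (μ * u) = (y' v - μ * y v) * Complex.exp (μ * v) := by
  have hderiv : ∀ u ∈ s,
      HasDerivAt (fun u : ℝ => (y' u - μ * y u) * Complex.exp (μ * u)) 0 u := by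
    intro u hu
    have hexp : HasDerivAt (fun u : ℝ => Complex.exp (μ * u)) (Complex.exp (μ * u) * μ) u :=
      (((hasDerivAt_id _).const_mul μ).cexp).comp_ofReal.congr_deriv (by simp)
    exact (((hy' u hu).sub ((hy u hu).const_mul μ)).mul hexp).congr_deriv
      (by rw [Pi.sub_apply]; ring)
  exact hs.is_const_of_deriv_eq_zero hs'
    (fun u hu => (hderiv u hu).differentiableAt.differentiableWithinAt)
    (fun u hu => (hderiv u hu).deriv) hu hv

lemma mul_eq_sinh_of_hasDerivAt {lam : ℂ} (hs : IsOpen s) (hs' : IsPreconnected s) (h0 : 0 ∈ s)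
    (hy : ∀ u ∈ s, HasDerivAt y (y' u) u) (hy' : ∀ u ∈ s, HasDerivAt y' (lam ^ 2 * y u) u)
    (hy0 : y 0 = 0) (hy'0 : y' 0 = 1) {u : ℝ} (hu : u ∈ s) :
    lam * y u = Complex.sinh (lam * u) := by
  have hplus := sub_mul_mul_exp_eq hs hs' hy hy' hu h0
  have hminus := sub_mul_mul_exp_eq (μ := -lam) hs hs' hy (by simpa using hy') hu h0
  simp only [hy0, hy'0, Complex.ofReal_zero, mul_zero, sub_zero, Complex.exp_zero,
    mul_one] at hplus hminus
  have hexp : Complex.exp (lam * u) * Complex.exp (-lam * u) = 1 := by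
    rw [← Complex.exp_add]; ring_nf; exact Complex.exp_zero
  rw [Complex.sinh, neg_mul_eq_neg_mul]
  linear_combination (Complex.exp (lam * u) * hminus - Complex.exp (-lam * u) * hplus) / 2
    - lam * y u * hexp

end SecondOrderODE

theorem sinh_div_eq_hypF (lam : ℂ) (hlam : lam ≠ 0) (θ : ℝ) (hθ0 : θ ≠ 0)
    (hθ : |Real.sinh (θ / 2)| < 1) :
    Complex.sinh (lam * θ) / (lam * Complex.sinh θ)
      = hypF (1 + lam) (1 - lam) (3 / 2) ((-(Real.sinh (θ / 2) ^ 2) : ℝ) : ℂ) := by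
  obtain ⟨k, hF⟩ := isBigO_hypCoeff lam
  set s := Metric.ball (0 : ℝ) (2 * Real.arsinh 1)
  have hz : ∀ u ∈ s, ‖negSinhHalfSq u‖ < 1 := fun u hu =>
    norm_negSinhHalfSq_lt_one (abs_sinh_half_lt_one_iff.2 (mem_ball_zero_iff.1 hu))
  have key := mul_eq_sinh_of_hasDerivAt (lam := lam) Metric.isOpen_ball
    (convex_ball _ _).isPreconnected (Metric.mem_ball_self (by simp [Real.arsinh_pos_iff]))
    (fun u hu => hasDerivAt_sinh_mul_comp (hasDerivAt_powSeries hF (hz u hu)))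
    (fun u hu => hasDerivAt_cosh_mul_comp_sub (hasDerivAt_powSeries hF (hz u hu))
      (hasDerivAt_powSeries (isBigO_derivCoeff hF) (hz u hu)) (by
        linear_combination powSeries_hypergeometric_ode
          (hypCoeff_succ_mul natCast_ne_neg_three_halves) hF (hz u hu)))
    (by simp) (by simp [negSinhHalfSq, powSeries_zero, hypCoeff_zero])
    (mem_ball_zero_iff.2 (abs_sinh_half_lt_one_iff.1 hθ))
  have hsinh : Complex.sinh θ ≠ 0 := by
    rw [← Complex.ofReal_sinh]
    exact_mod_cast Real.sinh_ne_zero.2 hθ0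
  rw [← key, hypF_eq_powSeries]
  field_simp
  rfl
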